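/- Let u : A ⥤ B be a functor between small categories and F : A ⥤ Type. Suppose the composite π_F ⋙ u : ∫F ⥤ B is factored as j ⋙ p, where j : ∫F ⥤ X is an initial functor and p : X ⥤ B is a discrete opfibration. Then the left Kan extension Lan_u F is the straightening of p: there is an equivalence of categories e : X ≌ ∫(Lan_u F) with e ⋙ π_{Lan_u F} = p (an equivalence over B between X and the category of elements of Lan_u F). -/

import Mathlib

open CategoryTheory

universe u

/-- A functor `π : X ⥤ Y` is a discrete opfibration if for every object `x` of `X` and
every morphism `g : π x ⟶ y` of `Y` there is a unique morphism of `X` with domain `x`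
lying over `g` (in particular, its codomain lies over `y`). -/
def IsDiscreteOpfibration {X : Type*} {Y : Type*} [Category X] [Category Y]
    (π : X ⥤ Y) : Prop :=
  ∀ ⦃x : X⦄ ⦃y : Y⦄ (g : π.obj x ⟶ y),
    ∃! p : Σ x' : X, (x ⟶ x'),
      (⟨π.obj p.1, π.map p.2⟩ : Σ y' : Y, (π.obj x ⟶ y')) = ⟨y, g⟩

/-! The straightening `G` of `p` sends `b` to the fibre of `p` over `b`, and `x ↦ (p x, x)` is an
equivalence `X ≌ ∫G` over `B`; composing it with `j` gives an initial functor `k : ∫F ⥤ ∫G` lying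
over `u`. Any such `k` exhibits `G` as `Lan_u F`: natural transformations `G ⟶ H` are the sections
of `π_G ⋙ H`, which restrict bijectively along the initial functor `k` to the sections of
`π_F ⋙ u ⋙ H`, i.e. to the natural transformations `F ⟶ u ⋙ H`. -/

universe w v₁ v₂ v₃ u₁ u₂ u₃

namespace CategoryTheory

open Limits

section KanExtension

variable {C : Type u₁} {D : Type u₂} {E : Type u₃} [Category.{v₁} C] [Category.{v₂} D]
  [Category.{v₃} E]

lemma Functor.isLeftKanExtension_of_bijective {L : C ⥤ D} {F : C ⥤ E} (F' : D ⥤ E)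
    (α : F ⟶ L ⋙ F')
    (h : ∀ G : D ⥤ E, Function.Bijective fun β : F' ⟶ G => α ≫ Functor.whiskerLeft L β) :
    F'.IsLeftKanExtension α where
  nonempty_isUniversal := ⟨IsInitial.ofUniqueHom
    (fun G => StructuredArrow.homMk ((h G.right).2 G.hom).choose ((h G.right).2 G.hom).choose_spec)
    (fun G m => StructuredArrow.ext _ _ <| (h G.right).1 <|
      (StructuredArrow.w m).trans ((h G.right).2 G.hom).choose_spec.symm)⟩

end KanExtension

namespace CategoryOfElements

variable {A : Type u₁} {B : Type u₂} [Category.{v₁} A] [Category.{v₂} B]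

def homEquivSections (F K : A ⥤ Type w) : (F ⟶ K) ≃ (π F ⋙ K).sections where
  toFun α := ⟨fun e => α.app e.1 e.2, by
    rintro ⟨a, y⟩ ⟨a', y'⟩ ⟨f, hf : F.map f y = y'⟩
    exact (NatTrans.naturality_apply α f y).symm.trans (congrArg (α.app a') hf)⟩
  invFun s :=
    { app a := ↾fun y => s.1 ⟨a, y⟩
      naturality a a' f := by
        ext y
        exact (s.2 (homMk ⟨a, y⟩ ⟨a', F.map f y⟩ f rfl)).symm }
  left_inv α := rfl
  right_inv s := rfl

variable (u : A ⥤ B) {F : A ⥤ Type w} {G : B ⥤ Type w} (k : F.Elements ⥤ G.Elements)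
  (φ : k ⋙ π G ≅ π F ⋙ u)

def natTransOfLift : F ⟶ u ⋙ G where
  app a := ↾fun y => G.map (φ.hom.app (F.elementsMk a y)) (k.obj (F.elementsMk a y)).2
  naturality a a' f := by
    ext y
    let m : F.elementsMk a y ⟶ F.elementsMk a' (F.map f y) := homMk _ _ f rfl
    change G.map _ (k.obj (F.elementsMk a' (F.map f y))).2 =
      G.map (u.map f) (G.map _ (k.obj (F.elementsMk a y)).2)
    refine (congrArg (G.map _) (k.map m).2).symm.trans ?_
    refine (G.map_comp_apply _ _ _).symm.trans ?_
    refine Eq.trans ?_ (G.map_comp_apply _ _ _)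
    exact congrArg (fun g => G.map g _) (φ.hom.naturality m)

lemma isLeftKanExtension_natTransOfLift [k.Initial] :
    G.IsLeftKanExtension (natTransOfLift u k φ) := by
  refine Functor.isLeftKanExtension_of_bijective _ _ fun H => ?_
  let transport := ((Functor.sectionsFunctor _).mapIso (Functor.isoWhiskerRight φ H)).toEquiv
  have hcomp : (fun β : G ⟶ H => natTransOfLift u k φ ≫ Functor.whiskerLeft u β) =
      (homEquivSections F (u ⋙ H)).symm ∘ transport ∘ k.sectionsPrecomp ∘
        homEquivSections G H := by
    funext β
    refine ((homEquivSections F (u ⋙ H)).eq_symm_apply).2 (Subtype.ext (funext fun e => ?_))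
    exact NatTrans.naturality_apply β _ _
  rw [hcomp]
  exact (Equiv.bijective _).comp ((Equiv.bijective _).comp
    ((k.bijective_sectionsPrecomp _).comp (Equiv.bijective _)))

end CategoryOfElements

namespace IsDiscreteOpfibration

variable {X : Type u₁} {B : Type u₂} [Category.{v₁} X] [Category.{v₂} B] {p : X ⥤ B}
  (hp : IsDiscreteOpfibration p)

noncomputable def lift {x : X} {b : B} (g : p.obj x ⟶ b) : Σ x' : X, (x ⟶ x') :=
  (hp g).choose

lemma obj_lift {x : X} {b : B} (g : p.obj x ⟶ b) : p.obj (hp.lift g).1 = b :=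
  congrArg Sigma.fst (hp g).choose_spec.1

lemma map_lift {x : X} {b : B} (g : p.obj x ⟶ b) :
    p.map (hp.lift g).2 ≫ eqToHom (hp.obj_lift g) = g :=
  eq_of_heq ((comp_eqToHom_heq _ _).trans (Sigma.mk.inj (hp g).choose_spec.1).2)

lemma lift_eq {x x' : X} {b : B} (g : p.obj x ⟶ b) (h : x ⟶ x') (hx' : p.obj x' = b)
    (w : p.map h ≫ eqToHom hx' = g) : hp.lift g = ⟨x', h⟩ := by
  refine ((hp g).choose_spec.2 ⟨x', h⟩ ?_).symm
  subst hx' w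
  simp

lemma faithful (hp : IsDiscreteOpfibration p) : p.Faithful where
  map_injective {x x'} f f' hff' := by
    have h := (hp.lift_eq (p.map f) f rfl (by simp)).symm.trans
      (hp.lift_eq (p.map f) f' rfl (by simp [hff']))
    exact eq_of_heq (Sigma.mk.inj h).2

noncomputable def straightening : B ⥤ Type u₁ where
  obj b := { x : X // p.obj x = b }
  map {b b'} g := ↾fun x => ⟨(hp.lift (eqToHom x.2 ≫ g)).1, hp.obj_lift _⟩
  map_id b := by
    ext x
    exact congrArg Sigma.fst (hp.lift_eq _ (𝟙 x.1) x.2 (by simp))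
  map_comp {b b' b''} g g' := by
    ext x
    refine congrArg Sigma.fst (hp.lift_eq _ ((hp.lift _).2 ≫ (hp.lift _).2) (hp.obj_lift _) ?_)
    rw [p.map_comp, Category.assoc, map_lift, ← Category.assoc, map_lift]
    simp

lemma straightening_map_mk_eq_iff {b b' : B} (g : b ⟶ b') {x x' : X} (hx : p.obj x = b)
    (hx' : p.obj x' = b') :
    (straightening hp).map g ⟨x, hx⟩ = ⟨x', hx'⟩ ↔
      ∃ h : x ⟶ x', p.map h ≫ eqToHom hx' = eqToHom hx ≫ g := by
  constructor
  · intro hmap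
    obtain rfl : (hp.lift (eqToHom hx ≫ g)).1 = x' := congrArg Subtype.val hmap
    exact ⟨_, hp.map_lift _⟩
  · rintro ⟨h, w⟩
    exact Subtype.ext (congrArg Sigma.fst (hp.lift_eq _ h hx' w))

def toElementsStraightening : X ⥤ (straightening hp).Elements where
  obj x := ⟨p.obj x, ⟨x, rfl⟩⟩
  map f := ⟨p.map f, (hp.straightening_map_mk_eq_iff _ _ _).2 ⟨f, by simp⟩⟩

instance : (toElementsStraightening hp).IsEquivalence where
  faithful :=
    have := hp.faithful
    Functor.Faithful.of_comp_eq (G := CategoryOfElements.π _) (H := p) rfl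
  full.map_surjective {x x'} g := by
    obtain ⟨h, w⟩ := (hp.straightening_map_mk_eq_iff _ _ _).1 g.2
    exact ⟨h, Subtype.ext ((Category.comp_id _).symm.trans (w.trans (Category.id_comp _)))⟩
  essSurj.mem_essImage := by
    rintro ⟨_, x, rfl⟩
    exact ⟨x, ⟨Iso.refl _⟩⟩

end IsDiscreteOpfibration

end CategoryTheory

/-- Let `u : A ⥤ B` and `F : A ⥤ Type u`, and suppose `π_F ⋙ u : ∫F ⥤ B` factors as an
initial functor `j : ∫F ⥤ X` followed by a discrete opfibration `p : X ⥤ B`. Then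
`Lan_u F` is the straightening of `p`: there is an equivalence of categories `e` between
`X` and the category of elements of `Lan_u F` which commutes with the projections to
`B`, i.e. `e.functor ⋙ π_{Lan_u F} = p`. -/
theorem lan_is_straightening_of_comprehensive_factorization
    {A B : Type u} [SmallCategory A] [SmallCategory B] (u : A ⥤ B) (F : A ⥤ Type u)
    {X : Type u} [SmallCategory X] (j : F.Elements ⥤ X) (p : X ⥤ B)
    (hj : j.Initial) (hp : IsDiscreteOpfibration p)
    (hfac : CategoryOfElements.π F ⋙ u = j ⋙ p) :
    ∃ e : X ≌ (u.lan.obj F).Elements,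
      e.functor ⋙ CategoryOfElements.π (u.lan.obj F) = p := by
  have := hj
  let k := j ⋙ hp.toElementsStraightening
  have := CategoryOfElements.isLeftKanExtension_natTransOfLift u k (eqToIso hfac.symm)
  let σ : u.lan.obj F ≅ hp.straightening := Functor.leftKanExtensionUnique _ (u.lanUnit.app F) _
    (CategoryOfElements.natTransOfLift u k (eqToIso hfac.symm))
  exact ⟨hp.toElementsStraightening.asEquivalence.trans
    (Cat.equivOfIso (Functor.elementsFunctor.mapIso σ.symm)), rfl⟩
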